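/- As α → ∞ and for fixed h₀ ≥ 1, the linearized surface Cauchy–Born strain U₀ = φ'(2)/(φ''(1) + (4 - 2/h₀)φ''(2)) · (1/h₀) satisfies h₀·U₀ = (e^{-α}/α)[1 - (1 + 2/h₀)e^{-α}] + O(e^{-3α}/α). -/

import Mathlib

/-- Equilibrium distance parameter of the Morse potential. -/
noncomputable def morseR0 (α : ℝ) : ℝ :=
  1 + (1 / α) * Real.log ((1 + 2 * Real.exp (-α)) / (1 + 2 * Real.exp (-2 * α)))

/-- The (shifted) Morse potential with stiffness α and shift φ₀. -/
noncomputable def morse (α φ₀ : ℝ) (r : ℝ) : ℝ :=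
  Real.exp (-2 * α * (r - morseR0 α)) - 2 * Real.exp (-α * (r - morseR0 α)) - φ₀

/-!
In the variable `E r = e^{-α(r - r₀)}` the Morse potential is `E² - 2E - φ₀`, so `φ'` and `φ''`
are polynomials in `E`. The choice of `r₀` makes `E 1 = (1 + 2u)/(1 + 2u²)` with `u = e^{-α}`,
and `E 2 = u · E 1`. Substituting, the strain collapses to `u(1 - u)/(α N)` with
`N = 1 + t u + (6 - 2t)u² + (8 - 2t)u³` and `t = 2/h₀`; since `N ≥ 1`, expanding `1/N` to first
order in `u` leaves a remainder `u³ P(t, u)/(α N)` with `P` bounded on `[0, 2] × [0, 1]`.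
-/

open Real

noncomputable def morseExp (α r : ℝ) : ℝ := exp (-α * (r - morseR0 α))

section MorseDerivatives

variable (α φ₀ : ℝ)

lemma morse_eq_morseExp : morse α φ₀ = fun r => morseExp α r ^ 2 - 2 * morseExp α r - φ₀ := by
  funext r
  rw [morse, morseExp, ← exp_nat_mul]
  ring_nf

lemma hasDerivAt_morseExp (r : ℝ) : HasDerivAt (morseExp α) (-α * morseExp α r) r := by
  have h := (((hasDerivAt_id' r).sub_const (morseR0 α)).const_mul (-α)).exp
  exact h.congr_deriv (by rw [morseExp]; ring)

lemma deriv_morse : deriv (morse α φ₀) = fun r => 2 * α * (morseExp α r - morseExp α r ^ 2) := by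
  funext r
  have h := (((hasDerivAt_morseExp α r).pow 2).sub
    ((hasDerivAt_morseExp α r).const_mul 2)).sub_const φ₀
  rw [morse_eq_morseExp]
  exact h.deriv.trans (by ring)

lemma deriv_deriv_morse (r : ℝ) :
    deriv (deriv (morse α φ₀)) r = 2 * α ^ 2 * (2 * morseExp α r ^ 2 - morseExp α r) := by
  have h := ((hasDerivAt_morseExp α r).sub ((hasDerivAt_morseExp α r).pow 2)).const_mul (2 * α)
  rw [deriv_morse]
  exact h.deriv.trans (by ring)

end MorseDerivatives

lemma morseExp_one {α : ℝ} (hα : α ≠ 0) :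
    morseExp α 1 = (1 + 2 * exp (-α)) / (1 + 2 * exp (-α) ^ 2) := by
  have hsq : exp (-2 * α) = exp (-α) ^ 2 := by rw [← exp_nat_mul]; ring_nf
  have hpos : 0 < (1 + 2 * exp (-α)) / (1 + 2 * exp (-α) ^ 2) := by positivity
  rw [morseExp, morseR0, hsq]
  convert exp_log hpos using 2
  field_simp
  ring

lemma morseExp_two (α : ℝ) : morseExp α 2 = exp (-α) * morseExp α 1 := by
  rw [morseExp, morseExp, ← exp_add]
  ring_nf

def strainDenom (t u : ℝ) : ℝ := 1 + t * u + (6 - 2 * t) * u ^ 2 + (8 - 2 * t) * u ^ 3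

section MorseValues

variable {α : ℝ} (φ₀ : ℝ) (hα : α ≠ 0)
include hα

lemma deriv_morse_two : deriv (morse α φ₀) 2 =
    2 * α * exp (-α) * (1 + 2 * exp (-α)) * (1 - exp (-α)) / (1 + 2 * exp (-α) ^ 2) ^ 2 := by
  have hv : 0 < 1 + 2 * exp (-α) ^ 2 := by positivity
  simp only [deriv_morse, morseExp_two, morseExp_one hα]
  field_simp
  ring

lemma deriv_deriv_morse_one_add_mul_two (t : ℝ) :
    deriv (deriv (morse α φ₀)) 1 + (4 - t) * deriv (deriv (morse α φ₀)) 2 =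
      2 * α ^ 2 * (1 + 2 * exp (-α)) * strainDenom t (exp (-α)) / (1 + 2 * exp (-α) ^ 2) ^ 2 := by
  have hv : 0 < 1 + 2 * exp (-α) ^ 2 := by positivity
  rw [deriv_deriv_morse, deriv_deriv_morse, morseExp_two, morseExp_one hα, strainDenom]
  field_simp
  ring

end MorseValues

lemma one_le_strainDenom {t u : ℝ} (ht₀ : 0 ≤ t) (ht₂ : t ≤ 2) (hu : 0 ≤ u) :
    1 ≤ strainDenom t u := by
  unfold strainDenom
  have : 0 ≤ t * u + (6 - 2 * t) * u ^ 2 + (8 - 2 * t) * u ^ 3 := by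
    have : 0 ≤ 6 - 2 * t := by linarith
    have : 0 ≤ 8 - 2 * t := by linarith
    positivity
  linarith

def strainRemainder (t u : ℝ) : ℝ :=
  -(6 - 3 * t - t ^ 2) - (2 - 6 * t + 2 * t ^ 2) * u + (1 + t) * (8 - 2 * t) * u ^ 2

lemma abs_strainRemainder_le {t u : ℝ} (ht₀ : 0 ≤ t) (ht₂ : t ≤ 2) (hu₀ : 0 ≤ u) (hu₁ : u ≤ 1) :
    |strainRemainder t u| ≤ 20 := by
  have ha : -4 ≤ 6 - 3 * t - t ^ 2 ∧ 6 - 3 * t - t ^ 2 ≤ 6 := ⟨by nlinarith, by nlinarith⟩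
  have hb : -3 ≤ 2 - 6 * t + 2 * t ^ 2 ∧ 2 - 6 * t + 2 * t ^ 2 ≤ 2 :=
    ⟨by nlinarith [sq_nonneg (2 * t - 3)], by nlinarith⟩
  have hc : 0 ≤ (1 + t) * (8 - 2 * t) ∧ (1 + t) * (8 - 2 * t) ≤ 13 :=
    ⟨by nlinarith, by nlinarith [sq_nonneg (2 * t - 3)]⟩
  have hu₂ : u ^ 2 ≤ 1 := pow_le_one₀ hu₀ hu₁
  rw [strainRemainder, abs_le]
  constructor
  · nlinarith [mul_nonneg (sub_nonneg.2 hb.2) hu₀, mul_nonneg hc.1 (sq_nonneg u)]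
  · nlinarith [mul_nonneg (neg_le_iff_add_nonneg.1 hb.1) hu₀,
      mul_nonneg (sub_nonneg.2 hc.2) (sq_nonneg u)]

lemma abs_div_strainDenom_sub_le {t u : ℝ} (ht₀ : 0 ≤ t) (ht₂ : t ≤ 2) (hu₀ : 0 ≤ u) (hu₁ : u ≤ 1) :
    |u * (1 - u) / strainDenom t u - u * (1 - (1 + t) * u)| ≤ 20 * u ^ 3 := by
  have hN := one_le_strainDenom ht₀ ht₂ hu₀
  have hexpand : u * (1 - u) / strainDenom t u - u * (1 - (1 + t) * u) =
      u ^ 3 * (strainRemainder t u / strainDenom t u) := by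
    field_simp
    rw [strainDenom, strainRemainder]
    ring
  rw [hexpand, abs_mul, abs_of_nonneg (by positivity), abs_div,
    abs_of_pos (show 0 < strainDenom t u by linarith), mul_comm 20]
  gcongr
  exact (div_le_self (abs_nonneg _) hN).trans (abs_strainRemainder_le ht₀ ht₂ hu₀ hu₁)

/-- for fixed h₀ ≥ 1, the linearized SCB strain
U₀ = φ'(2)/(φ''(1) + (4-2/h₀)φ''(2)) · (1/h₀) satisfies
h₀U₀ = (e^{-α}/α)[1 - (1+2/h₀)e^{-α}] + O(e^{-3α}/α) as α → ∞. -/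
theorem stmt_10 (φ₀ h₀ : ℝ) (hh : 1 ≤ h₀) :
    ∃ C α₀ : ℝ, 0 < C ∧ 0 < α₀ ∧ ∀ α : ℝ, α₀ ≤ α →
      0 < deriv (deriv (morse α φ₀)) 1 + (4 - 2 / h₀) * deriv (deriv (morse α φ₀)) 2 ∧
      |h₀ * (deriv (morse α φ₀) 2 /
            (deriv (deriv (morse α φ₀)) 1 + (4 - 2 / h₀) * deriv (deriv (morse α φ₀)) 2)
            * (1 / h₀))
        - Real.exp (-α) / α * (1 - (1 + 2 / h₀) * Real.exp (-α))|
        ≤ C * Real.exp (-3 * α) / α := by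
  refine ⟨20, 1, by norm_num, one_pos, fun α hα => ?_⟩
  have hα₀ : 0 < α := one_pos.trans_le hα
  have hh₀ : 0 < h₀ := one_pos.trans_le hh
  have ht₀ : 0 ≤ 2 / h₀ := by positivity
  have ht₂ : 2 / h₀ ≤ 2 := div_le_self zero_le_two hh
  rw [deriv_deriv_morse_one_add_mul_two φ₀ hα₀.ne', deriv_morse_two φ₀ hα₀.ne']
  set u := exp (-α)
  have hu₀ : 0 ≤ u := (exp_pos _).le
  have hu₁ : u ≤ 1 := exp_le_one_iff.2 (by linarith)
  have hN := one_le_strainDenom ht₀ ht₂ hu₀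
  refine ⟨div_pos (mul_pos (by positivity) (by linarith)) (by positivity), ?_⟩
  have hstrain : h₀ * (2 * α * u * (1 + 2 * u) * (1 - u) / (1 + 2 * u ^ 2) ^ 2 /
      (2 * α ^ 2 * (1 + 2 * u) * strainDenom (2 / h₀) u / (1 + 2 * u ^ 2) ^ 2) * (1 / h₀)) =
      u * (1 - u) / strainDenom (2 / h₀) u / α := by
    field_simp
  have hexp : exp (-3 * α) = u ^ 3 := by rw [← exp_nat_mul]; ring_nf
  rw [hstrain, hexp, div_mul_eq_mul_div, ← sub_div, abs_div, abs_of_pos hα₀]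
  exact div_le_div_of_nonneg_right (abs_div_strainDenom_sub_le ht₀ ht₂ hu₀ hu₁) hα₀.le
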